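/- Let R be a commutative unital ring, A an associative unital R-algebra, M a left A-module, and N an R-submodule of M. Then the following statements are equivalent: (1) N is an A-submodule of M; (2) σ_l(N) = M; (3) τ_l(N) = M, where σ_l(N) := {u ∈ M | (N : u) is a left ideal of A} and τ_l(N) := {u ∈ M | (N : u) is a left Mathieu subspace of A}. -/

import Mathlib

/-- `J` is a left Mathieu subspace of the `R`-algebra `A`. -/
def IsLeftMathieuSubspace {R A : Type*} [CommRing R] [Ring A] [Algebra R A]
    (J : Submodule R A) : Prop :=
  ∀ a : A, (∀ m : ℕ, 1 ≤ m → a ^ m ∈ J) →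
    ∀ b : A, ∃ N : ℕ, 1 ≤ N ∧ ∀ m : ℕ, N ≤ m → b * a ^ m ∈ J

/-- An `R`-subspace `J` of `A` is a left ideal of `A` if it absorbs
multiplication from the left. -/
def IsLeftIdealSubspace {R A : Type*} [CommRing R] [Ring A] [Algebra R A]
    (J : Submodule R A) : Prop :=
  ∀ a ∈ J, ∀ b : A, b * a ∈ J

variable {R A M : Type*} [CommRing R] [Ring A] [Algebra R A] [AddCommGroup M]
  [Module A M] [Module R M] [IsScalarTower R A M]

/-- For `u ∈ M` and an `R`-subspace `N` of `M`, the `R`-subspace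
`(N : u) = {a ∈ A | a • u ∈ N}` of `A`. -/
def colonSub (N : Submodule R M) (u : M) : Submodule R A where
  carrier := {a : A | a • u ∈ N}
  add_mem' := by
    intro a b ha hb
    simp only [Set.mem_setOf_eq, add_smul] at *
    exact N.add_mem ha hb
  zero_mem' := by
    simp only [Set.mem_setOf_eq, zero_smul]
    exact N.zero_mem
  smul_mem' := by
    intro r a ha
    simp only [Set.mem_setOf_eq] at *
    rw [smul_assoc]
    exact N.smul_mem r ha

/-- The set of left stable elements of `N`. -/
def sigmaLeftSet (N : Submodule R M) : Set M :=
  {u : M | IsLeftIdealSubspace (colonSub (A := A) N u)}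

/-- The set of left quasi-stable elements of `N`. -/
def tauLeftSet (N : Submodule R M) : Set M :=
  {u : M | IsLeftMathieuSubspace (colonSub (A := A) N u)}

/-! The three conditions form the cycle (1) ⇒ (2) ⇒ (3) ⇒ (1). The first two steps hold because
`(N : u)` is a left ideal whenever `N` is `A`-stable, and left ideals are left Mathieu subspaces.
For the last, `x ∈ N` puts `1` and all its powers in `(N : x)`, so the Mathieu property of
`(N : x)` gives `a * 1 ^ m ∈ (N : x)`, that is `a • x ∈ N`. -/

theorem IsLeftIdealSubspace.isLeftMathieuSubspace {R A : Type*} [CommRing R] [Ring A]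
    [Algebra R A] {J : Submodule R A} (hJ : IsLeftIdealSubspace J) : IsLeftMathieuSubspace J :=
  fun _ ha b => ⟨1, le_rfl, fun m hm => hJ _ (ha m hm) b⟩

@[simp]
theorem mem_colonSub {N : Submodule R M} {u : M} {a : A} :
    a ∈ colonSub (A := A) N u ↔ a • u ∈ N :=
  Iff.rfl

theorem sigmaLeftSet_subset_tauLeftSet (N : Submodule R M) :
    sigmaLeftSet (A := A) N ⊆ tauLeftSet (A := A) N :=
  fun _ hu => IsLeftIdealSubspace.isLeftMathieuSubspace hu

theorem sigmaLeftSet_eq_univ_of_smul_mem {N : Submodule R M}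
    (hN : ∀ (a : A), ∀ x ∈ N, a • x ∈ N) : sigmaLeftSet (A := A) N = Set.univ :=
  Set.eq_univ_of_forall fun _ a ha b => by
    rw [mem_colonSub, mul_smul]
    exact hN b _ ha

theorem smul_mem_of_mem_tauLeftSet {N : Submodule R M} {x : M} (hx : x ∈ N)
    (hτ : x ∈ tauLeftSet (A := A) N) (a : A) : a • x ∈ N := by
  have one_pow_mem : ∀ m : ℕ, 1 ≤ m → (1 : A) ^ m ∈ colonSub (A := A) N x := fun m _ => by
    rwa [one_pow, mem_colonSub, one_smul]
  obtain ⟨n, -, hn⟩ := hτ 1 one_pow_mem a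
  simpa using hn n le_rfl

theorem stmt11 (N : Submodule R M) :
    ((∀ (a : A), ∀ x ∈ N, a • x ∈ N) ↔ sigmaLeftSet (A := A) N = Set.univ) ∧
    ((∀ (a : A), ∀ x ∈ N, a • x ∈ N) ↔ tauLeftSet (A := A) N = Set.univ) := by
  have stable_to_sigma := sigmaLeftSet_eq_univ_of_smul_mem (A := A) (N := N)
  have sigma_to_tau : sigmaLeftSet (A := A) N = Set.univ → tauLeftSet (A := A) N = Set.univ :=
    fun hσ => Set.eq_univ_of_univ_subset (hσ ▸ sigmaLeftSet_subset_tauLeftSet N)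
  have tau_to_stable : tauLeftSet (A := A) N = Set.univ → ∀ (a : A), ∀ x ∈ N, a • x ∈ N :=
    fun hτ a x hx => smul_mem_of_mem_tauLeftSet hx (hτ ▸ Set.mem_univ x) a
  exact ⟨⟨stable_to_sigma, tau_to_stable ∘ sigma_to_tau⟩,
    ⟨sigma_to_tau ∘ stable_to_sigma, tau_to_stable⟩⟩
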